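/- arXiv:2404.15434 — 2 statements merged into one kernel-verified Lean document; each statement's English description precedes it below -/
import Mathlib

section
/- Let η ∈ ℝ ∖ {0}. Then the variance of F_η, regarded as a random variable on (𝔄(M,A), μ₁), satisfies Var[F_η] = 𝔼[|F_η|²] ≤ 32/A. -/
/-!
Let `f(a) = e^{-iηa} - 𝔼_b e^{-iηb}` on `{0, …, M-1}`, so that `F_η(𝒜) = A⁻¹ ∑_{a ∈ 𝒜} f(a)`,
`∑_a f(a) = 0` and `|f| ≤ 2`. Expanding `|∑_{a ∈ 𝒜} f(a)|²` and summing over all `𝒜`, each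
diagonal term is counted `C(M-1, A-1)` times and each off-diagonal one `C(M-2, A-2)` times; as
`∑_a f(a) = 0` the off-diagonal terms add up to minus the diagonal ones, so the total is at most
`C(M-1, A-1) ∑_a |f(a)|² ≤ 4M C(M-1, A-1) = 4A C(M, A)`. Dividing by `A² C(M, A)` gives `4/A`.
-/

open MeasureTheory Finset Filter Topology

namespace FUPRandom

/-- The space of alphabets of cardinality `A` from digits `{0, ..., M-1}`. -/
def Alphabet (M A : ℕ) : Type := {s : Finset (Fin M) // s.card = A}

instance (M A : ℕ) : Fintype (Alphabet M A) := by unfold Alphabet; infer_instance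
instance (M A : ℕ) : DecidableEq (Alphabet M A) := by unfold Alphabet; infer_instance
instance (M A : ℕ) : MeasurableSpace (Alphabet M A) := ⊤

/-- The uniform (counting) probability measure on a finite type. -/
noncomputable def uniformMeasure (α : Type*) [Fintype α] [MeasurableSpace α] : Measure α :=
  (Fintype.card α : ENNReal)⁻¹ • Measure.count

/-- `F_η(𝒜) = (1/A) ∑_{a ∈ 𝒜} e^{-iηa} - (1/M) ∑_{a=0}^{M-1} e^{-iηa}`. -/
noncomputable def Feta (M A : ℕ) (η : ℝ) (𝒜 : Alphabet M A) : ℂ :=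
  (A : ℂ)⁻¹ * ∑ a ∈ 𝒜.val, Complex.exp (-(Complex.I * η * (a : ℕ)))
    - (M : ℂ)⁻¹ * ∑ a ∈ Finset.range M, Complex.exp (-(Complex.I * η * a))

/-- A configuration: for each level `j` (counted from `0`, corresponding to the
`(j+1)`-st iteration of the construction), an alphabet for each of the `A ^ j`
points of the previous level, indexed via `finFunctionFinEquiv`. -/
def Config (M A : ℕ) : Type := (j : ℕ) → (Fin (A ^ j) → Alphabet M A)

instance (M A : ℕ) : MeasurableSpace (Config M A) := by unfold Config; infer_instance

/-- The `k`-th smallest digit of an alphabet, as a natural number. -/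
def digit {M A : ℕ} (𝒜 : Alphabet M A) (k : Fin A) : ℕ :=
  ((𝒜.val.orderIsoOfFin 𝒜.prop k : Fin M) : ℕ)

/-- The point of `B_j` indexed by a word `w : Fin j → Fin A`, for a given
configuration `ω`. -/
noncomputable def cantorPoint (M A : ℕ) (ω : Config M A) : (j : ℕ) → (Fin j → Fin A) → ℝ
  | 0, _ => 0
  | (j + 1), w =>
      cantorPoint M A ω j (fun i => w i.castSucc)
        + (digit (ω j (finFunctionFinEquiv (fun i => w i.castSucc))) (w (Fin.last j)) : ℝ)
          / (M : ℝ) ^ (j + 1)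

/-- The `j`-th iteration `𝒞_j` of the Cantor set: a union of `A ^ j` closed
intervals of length `M ^ (-j)`. -/
noncomputable def cantorIter (M A : ℕ) (ω : Config M A) (j : ℕ) : Set ℝ :=
  ⋃ w : Fin j → Fin A,
    Set.Icc (cantorPoint M A ω j w) (cantorPoint M A ω j w + ((M : ℝ) ^ j)⁻¹)

/-- The Cantor set `𝒞 = ⋂_{j ≥ 1} 𝒞_j`. -/
noncomputable def cantorSet (M A : ℕ) (ω : Config M A) : Set ℝ :=
  ⋂ j ∈ {j : ℕ | 1 ≤ j}, cantorIter M A ω j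

/-- The measure `ν_j`, with density `(M/A)^j 1_{𝒞_j}` w.r.t. Lebesgue measure. -/
noncomputable def cantorMeasureIter (M A : ℕ) (ω : Config M A) (j : ℕ) : Measure ℝ :=
  ((M : ENNReal) ^ j / (A : ENNReal) ^ j) • (volume.restrict (cantorIter M A ω j))

/-- `ν` is the weak limit of the measures `ν_j`. -/
def IsCantorMeasure (M A : ℕ) (ω : Config M A) (ν : Measure ℝ) : Prop :=
  ∀ f : BoundedContinuousFunction ℝ ℝ,
    Tendsto (fun j => ∫ x, f x ∂(cantorMeasureIter M A ω j)) atTop (𝓝 (∫ x, f x ∂ν))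

/-- `μ^∞` is the product of the uniform probability measures: a probability
measure on the configuration space whose coordinates are independent and
uniformly distributed. -/
def IsProductUniform (M A : ℕ) (P : Measure (Config M A)) : Prop :=
  IsProbabilityMeasure P ∧
    ProbabilityTheory.iIndepFun (fun j ω => ω j) P ∧
    ∀ j : ℕ, P.map (fun ω => ω j) = uniformMeasure (Fin (A ^ j) → Alphabet M A)

/-- The Fourier transform `ℱν(ξ) = (2π)^{-1/2} ∫ e^{-ixξ} dν(x)` of a measure. -/
noncomputable def fourierMeasure (ν : Measure ℝ) (ξ : ℝ) : ℂ :=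
  (Real.sqrt (2 * Real.pi) : ℂ)⁻¹ * ∫ x, Complex.exp (-(Complex.I * x * ξ)) ∂ν

/-- The Fourier transform `ℱu(ξ) = (2π)^{-1/2} ∫ e^{-ixξ} u(x) dx` of a function. -/
noncomputable def fourierFn (u : ℝ → ℂ) (ξ : ℝ) : ℂ :=
  (Real.sqrt (2 * Real.pi) : ℂ)⁻¹ * ∫ x : ℝ, Complex.exp (-(Complex.I * x * ξ)) * u x

/-- The semiclassical Fourier transform
`ℱ_h u(ξ) = (2πh)^{-1/2} ∫ e^{-ixξ/h} u(x) dx`. -/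
noncomputable def semiclassicalFourier (h : ℝ) (u : ℝ → ℂ) (ξ : ℝ) : ℂ :=
  (Real.sqrt (2 * Real.pi * h) : ℂ)⁻¹ * ∫ x : ℝ, Complex.exp (-(Complex.I * x * ξ / h)) * u x

open scoped BigOperators

lemma norm_sum_sq_eq_sum_sum_inner {ι E : Type*} [NormedAddCommGroup E] [InnerProductSpace ℝ E]
    (s : Finset ι) (f : ι → E) :
    ‖∑ i ∈ s, f i‖ ^ 2 = ∑ i ∈ s, ∑ j ∈ s, inner ℝ (f i) (f j) := by
  rw [← real_inner_self_eq_norm_sq, sum_inner]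
  simp_rw [inner_sum]

section SubsetSums

variable {α : Type*} [Fintype α] [DecidableEq α]

lemma card_filter_powersetCard_mem {A : ℕ} (hA : 1 ≤ A) (a : α) :
    #{s ∈ powersetCard A univ | a ∈ s} = (Fintype.card α - 1).choose (A - 1) := by
  simpa using card_filter_powersetCard_subset {a} univ A (subset_univ _) (by simpa using hA)

lemma card_filter_powersetCard_mem_mem {A : ℕ} (hA : 2 ≤ A) {a b : α} (hab : a ≠ b) :
    #{s ∈ powersetCard A univ | a ∈ s ∧ b ∈ s} = (Fintype.card α - 2).choose (A - 2) := by
  simpa [insert_subset_iff, card_pair hab] using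
    card_filter_powersetCard_subset {a, b} univ A (subset_univ _) (by rwa [card_pair hab])

lemma sum_sum_sum_mem_eq_sum_sum_card_smul {M : Type*} [AddCommMonoid M] (𝒯 : Finset (Finset α))
    (h : α → α → M) :
    ∑ s ∈ 𝒯, ∑ a ∈ s, ∑ b ∈ s, h a b = ∑ a, ∑ b, #{s ∈ 𝒯 | a ∈ s ∧ b ∈ s} • h a b := by
  have (s : Finset α) :
      ∑ a ∈ s, ∑ b ∈ s, h a b = ∑ a, ∑ b, if a ∈ s ∧ b ∈ s then h a b else 0 := by
    rw [← sum_ite_mem_eq]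
    refine sum_congr rfl fun a _ => ?_
    split_ifs with ha
    · rw [← sum_ite_mem_eq]
      simp [ha]
    · simp [ha]
  simp_rw [this, card_filter, sum_smul, ite_smul, one_smul, zero_smul]
  rw [sum_comm]
  exact sum_congr rfl fun a _ => sum_comm

variable {E : Type*} [NormedAddCommGroup E] [InnerProductSpace ℝ E]

lemma sum_powersetCard_norm_sum_sq {A : ℕ} (hA : 2 ≤ A) (f : α → E) :
    ∑ s ∈ powersetCard A univ, ‖∑ a ∈ s, f a‖ ^ 2
      = ((Fintype.card α - 2).choose (A - 2) : ℝ) * ‖∑ a, f a‖ ^ 2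
        + (((Fintype.card α - 1).choose (A - 1) : ℝ) - (Fintype.card α - 2).choose (A - 2))
          * ∑ a, ‖f a‖ ^ 2 := by
  set c₁ : ℝ := ↑((Fintype.card α - 1).choose (A - 1))
  set c₂ : ℝ := ↑((Fintype.card α - 2).choose (A - 2))
  have hcard (a b : α) :
      (#{s ∈ powersetCard A univ | a ∈ s ∧ b ∈ s} : ℝ) = c₂ + if a = b then c₁ - c₂ else 0 := by
    by_cases hab : a = b
    · simp [hab, c₁, card_filter_powersetCard_mem (one_le_two.trans hA)]
    · simp [hab, c₂, card_filter_powersetCard_mem_mem hA hab]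
  simp_rw [norm_sum_sq_eq_sum_sum_inner, sum_sum_sum_mem_eq_sum_sum_card_smul, nsmul_eq_mul,
    hcard, add_mul, sum_add_distrib, ← mul_sum, ite_mul, zero_mul, sum_ite_eq, mem_univ, if_true,
    ← mul_sum, real_inner_self_eq_norm_sq]

lemma sum_powersetCard_norm_sum_sq_le {A : ℕ} (hA : 1 ≤ A) (f : α → E) (hf : ∑ a, f a = 0) :
    ∑ s ∈ powersetCard A univ, ‖∑ a ∈ s, f a‖ ^ 2
      ≤ ((Fintype.card α - 1).choose (A - 1) : ℝ) * ∑ a, ‖f a‖ ^ 2 := by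
  -- `A = 1` is separate: there are no pairs, while `(_ - 2).choose (A - 2)` would truncate to `1`.
  obtain rfl | hA := hA.eq_or_lt
  · simp [powersetCard_one]
  rw [sum_powersetCard_norm_sum_sq hA, hf, norm_zero, sub_mul]
  have : 0 ≤ ((Fintype.card α - 2).choose (A - 2) : ℝ) * ∑ a, ‖f a‖ ^ 2 := by positivity
  linarith

end SubsetSums

lemma sum_sub_expect_eq_zero {ι M : Type*} [Fintype ι] [AddCommGroup M] [Module ℚ≥0 M]
    (g : ι → M) : ∑ i, (g i - 𝔼 j, g j) = 0 := by
  rw [sum_sub_distrib, sum_const, card_univ, Fintype.card_smul_expect, sub_self]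

lemma norm_sub_expect_le_two {ι K : Type*} [Fintype ι] [NormedField K] [CharZero K]
    [NormedSpace ℝ K] (g : ι → K) (hg : ∀ i, ‖g i‖ ≤ 1) (i : ι) :
    ‖g i - 𝔼 j, g j‖ ≤ 2 :=
  calc ‖g i - 𝔼 j, g j‖ ≤ ‖g i‖ + ‖𝔼 j, g j‖ := norm_sub_le _ _
    _ ≤ 1 + 1 := add_le_add (hg i) <|
      RCLike.norm_expect_le (K := ℝ) |>.trans (expect_le ⟨i, mem_univ i⟩ fun j _ => hg j)
    _ = 2 := one_add_one_eq_two

lemma mul_choose_sub_one_sub_one {n k : ℕ} (hk : 1 ≤ k) :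
    n * (n - 1).choose (k - 1) = k * n.choose k := by
  obtain ⟨k, rfl⟩ := Nat.exists_eq_add_of_le' hk
  cases n with
  | zero => simp
  | succ n => simpa [mul_comm] using Nat.add_one_mul_choose_eq n k

lemma card_alphabet (M A : ℕ) : Fintype.card (Alphabet M A) = M.choose A :=
  (Fintype.card_finset_len (α := Fin M) A).trans (by rw [Fintype.card_fin])

lemma sum_alphabet {β : Type*} [AddCommMonoid β] (M A : ℕ) (g : Finset (Fin M) → β) :
    ∑ 𝒜 : Alphabet M A, g 𝒜.val = ∑ s ∈ powersetCard A univ, g s :=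
  (sum_subtype _ (fun _ => mem_powersetCard_univ) g).symm

theorem variance_Feta_general (M A : ℕ) (hA1 : 1 ≤ A) (η : ℝ) :
    (Fintype.card (Alphabet M A) : ℝ)⁻¹ *
        ∑ 𝒜 : Alphabet M A, ‖Feta M A η 𝒜‖ ^ 2
      ≤ 32 / A := by
  set e : Fin M → ℂ := fun a => Complex.exp (-(Complex.I * η * (a : ℕ)))
  set f : Fin M → ℂ := fun a => e a - 𝔼 b, e b
  have hF (𝒜 : Alphabet M A) : Feta M A η 𝒜 = (A : ℂ)⁻¹ * ∑ a ∈ 𝒜.val, f a := by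
    have hA : (A : ℂ) ≠ 0 := Nat.cast_ne_zero.2 (by omega)
    simp only [Feta, f, sum_sub_distrib, sum_const, 𝒜.prop, nsmul_eq_mul,
      Fintype.expect_eq_sum_div_card, Fintype.card_fin, e, Fin.sum_univ_eq_sum_range
        (fun n => Complex.exp (-(Complex.I * η * n))) M]
    field_simp
  have he (a : Fin M) : ‖e a‖ ≤ 1 := by
    simp [e, Complex.norm_exp]
  have hf : ∑ a, ‖f a‖ ^ 2 ≤ M * 2 ^ 2 := by
    calc ∑ a, ‖f a‖ ^ 2 ≤ ∑ _a : Fin M, (2 : ℝ) ^ 2 :=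
          sum_le_sum fun a _ => pow_le_pow_left₀ (norm_nonneg _) (norm_sub_expect_le_two e he a) 2
      _ = M * 2 ^ 2 := by simp
  have hchoose : (A : ℝ)⁻¹ ^ 2 * (M * (M - 1).choose (A - 1)) = (A : ℝ)⁻¹ * M.choose A := by
    rw [← Nat.cast_mul, mul_choose_sub_one_sub_one hA1, Nat.cast_mul]
    field_simp
  calc (Fintype.card (Alphabet M A) : ℝ)⁻¹ * ∑ 𝒜 : Alphabet M A, ‖Feta M A η 𝒜‖ ^ 2
      = (M.choose A : ℝ)⁻¹ * ((A : ℝ)⁻¹ ^ 2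
          * ∑ s ∈ powersetCard A univ, ‖∑ a ∈ s, f a‖ ^ 2) := by
        simp_rw [card_alphabet, hF, norm_mul, mul_pow, ← mul_sum, norm_inv, Complex.norm_natCast,
          sum_alphabet M A (fun s => ‖∑ a ∈ s, f a‖ ^ 2)]
    _ ≤ (M.choose A : ℝ)⁻¹ * ((A : ℝ)⁻¹ ^ 2 * ((M - 1).choose (A - 1) * (M * 2 ^ 2))) := by
        gcongr
        exact (sum_powersetCard_norm_sum_sq_le hA1 f (sum_sub_expect_eq_zero e)).trans
          (by simpa using mul_le_mul_of_nonneg_left hf (Nat.cast_nonneg _))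
    _ = 4 / A * ((M.choose A : ℝ)⁻¹ * M.choose A) := by
        linear_combination (4 * (M.choose A : ℝ)⁻¹) * hchoose
    _ ≤ 4 / A * 1 := by
        gcongr
        exact inv_mul_le_one_of_le₀ le_rfl (Nat.cast_nonneg _)
    _ ≤ 32 / A := by
        rw [mul_one]
        gcongr
        norm_num

/-- **Variance bound for `F_η`.**
For `η ≠ 0`, the variance of `F_η` on `(𝔄(M,A), μ₁)` satisfies
`Var[F_η] = 𝔼[|F_η|²] ≤ 32 / A` (using that `𝔼[F_η] = 0`). -/
theorem variance_Feta (M A : ℕ) (hM : 3 ≤ M) (hA1 : 1 ≤ A) (hAM : A ≤ M)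
    (η : ℝ) (hη : η ≠ 0) :
    (Fintype.card (Alphabet M A) : ℝ)⁻¹ *
        ∑ 𝒜 : Alphabet M A, ‖Feta M A η 𝒜‖ ^ 2
      ≤ 32 / A :=
  variance_Feta_general M A hA1 η

end FUPRandom
end

section
/- Let M, A ∈ ℕ with M ≥ 3 and 2 ≤ A ≤ M − 1. Every Cantor set 𝒞 arising from the iterative construction has Hausdorff dimension δ = log A / log M. -/
/-!
Covering `𝒞` by the `A ^ j` intervals of `𝒞_j`, each of length `M ^ (-j)`, gives
`∑ diam ^ δ = A ^ j * M ^ (-j δ) = 1`, hence `μH[δ] 𝒞 ≤ 1`.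

For the lower bound, points of `𝒞` are coded by addresses `x : ℕ → Fin A` (the rank of the
digit chosen at each step of the construction), and the uniform product measure on addresses is
pushed forward to `𝒞`. The left endpoints of the intervals of `𝒞_j` are `M ^ (-j)`-separated, so a set `E`
with `diam E ≤ M ^ (-j)` meets at most four of these intervals and receives mass at most
`4 A ^ (-j)`. Choosing `j` with `M ^ (-j-1) < diam E ≤ M ^ (-j)` turns this into the bound
`4 A (diam E) ^ δ`, and the mass distribution principle gives `μH[δ] 𝒞 ≥ 1 / (4 A) > 0`.
-/

open MeasureTheory Finset Filter Topology

open scoped ENNReal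

lemma ENNReal.ofReal_inv_natCast_pow {n : ℕ} (hn : 0 < n) (j : ℕ) :
    ENNReal.ofReal ((n : ℝ) ^ j)⁻¹ = ((n : ℝ≥0∞) ^ j)⁻¹ := by
  rw [ENNReal.ofReal_inv_of_pos (by positivity), ENNReal.ofReal_pow (by positivity),
    ENNReal.ofReal_natCast]

lemma ENNReal.tendsto_inv_pow_atTop_nhds_zero {b : ℝ≥0∞} (hb : 1 < b) :
    Tendsto (fun n : ℕ => (b ^ n)⁻¹) atTop (𝓝 0) := by
  simpa [ENNReal.inv_pow] using
    ENNReal.tendsto_pow_atTop_nhds_zero_of_lt_one (ENNReal.inv_lt_one.2 hb)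

lemma ENNReal.exists_inv_pow_succ_lt_le {b d : ℝ≥0∞} (hb : 1 < b) (hd₀ : 0 < d) (hd₁ : d ≤ 1) :
    ∃ n : ℕ, (b ^ (n + 1))⁻¹ < d ∧ d ≤ (b ^ n)⁻¹ := by
  classical
  have hex : ∃ n : ℕ, (b ^ (n + 1))⁻¹ < d :=
    (((ENNReal.tendsto_inv_pow_atTop_nhds_zero hb).comp (tendsto_add_atTop_nat 1)).eventually
      (gt_mem_nhds hd₀)).exists
  refine ⟨Nat.find hex, Nat.find_spec hex, ?_⟩
  rcases h : Nat.find hex with _ | k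
  · simpa using hd₁
  · exact not_lt.1 (Nat.find_min hex (h ▸ k.lt_succ_self))

lemma ENNReal.inv_natCast_pow_rpow_logb {M A : ℕ} (hM : 1 < M) (hA : 0 < A) (j : ℕ) :
    ((M : ℝ≥0∞) ^ j)⁻¹ ^ Real.logb M A = ((A : ℝ≥0∞) ^ j)⁻¹ := by
  have hM' : (1 : ℝ) < M := by exact_mod_cast hM
  rw [← ENNReal.ofReal_inv_natCast_pow (by omega), ← ENNReal.ofReal_inv_natCast_pow hA,
    ENNReal.ofReal_rpow_of_pos (by positivity), Real.inv_rpow (by positivity),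
    ← Real.rpow_natCast, ← Real.rpow_mul (by positivity), mul_comm, Real.rpow_mul (by positivity),
    Real.rpow_logb (by positivity) hM'.ne' (by positivity), Real.rpow_natCast]

lemma Finset.card_le_of_separated_of_mem_Ico {ι : Type*} (s : Finset ι) (f : ι → ℝ) {a L : ℝ}
    (hL : 0 < L) {n : ℕ} (hs : ∀ i ∈ s, f i ∈ Set.Ico a (a + n * L))
    (hsep : ∀ i ∈ s, ∀ k ∈ s, i ≠ k → L ≤ |f i - f k|) : s.card ≤ n := by
  have hfloor : ∀ i ∈ s, ⌊(f i - a) / L⌋ ∈ Finset.Ico (0 : ℤ) n := by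
    intro i hi
    obtain ⟨h₁, h₂⟩ := hs i hi
    rw [Finset.mem_Ico, Int.floor_nonneg, Int.floor_lt, le_div_iff₀ hL, div_lt_iff₀ hL]
    constructor <;> push_cast <;> linarith
  simpa using Finset.card_le_card_of_injOn _ hfloor fun i hi k hk h => by
    by_contra hne
    have := Int.abs_sub_lt_one_of_floor_eq_floor h
    rw [div_sub_div_same, sub_sub_sub_cancel_right, abs_div, abs_of_pos hL, div_lt_one hL] at this
    exact (hsep i hi k hk hne).not_gt this

namespace FUPRandom

section Geometry

variable {M A : ℕ} (ω : Config M A)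

lemma digit_lt (𝒜 : Alphabet M A) (k : Fin A) : digit 𝒜 k < M :=
  (𝒜.val.orderIsoOfFin 𝒜.prop k : Fin M).2

lemma digit_injective (𝒜 : Alphabet M A) : Function.Injective (digit 𝒜) :=
  Fin.val_injective.comp <| Subtype.val_injective.comp (𝒜.val.orderIsoOfFin 𝒜.prop).injective

lemma cantorPoint_succ (j : ℕ) (w : Fin (j + 1) → Fin A) :
    cantorPoint M A ω (j + 1) w = cantorPoint M A ω j (Fin.init w)
      + digit (ω j (finFunctionFinEquiv (Fin.init w))) (w (Fin.last j)) / (M : ℝ) ^ (j + 1) :=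
  rfl

def cantorInterval (j : ℕ) (w : Fin j → Fin A) : Set ℝ :=
  Set.Icc (cantorPoint M A ω j w) (cantorPoint M A ω j w + ((M : ℝ) ^ j)⁻¹)

lemma cantorPoint_init_le (j : ℕ) (w : Fin (j + 1) → Fin A) :
    cantorPoint M A ω j (Fin.init w) ≤ cantorPoint M A ω (j + 1) w := by
  rw [cantorPoint_succ]
  exact le_add_of_nonneg_right (by positivity)

lemma cantorPoint_add_le_init (hM : 0 < M) (j : ℕ) (w : Fin (j + 1) → Fin A) :
    cantorPoint M A ω (j + 1) w + ((M : ℝ) ^ (j + 1))⁻¹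
      ≤ cantorPoint M A ω j (Fin.init w) + ((M : ℝ) ^ j)⁻¹ := by
  have hd : (digit (ω j (finFunctionFinEquiv (Fin.init w))) (w (Fin.last j)) : ℝ) + 1 ≤ M := by
    exact_mod_cast digit_lt _ _
  have hM' : (0 : ℝ) < M := by exact_mod_cast hM
  rw [cantorPoint_succ, add_assoc, add_le_add_iff_left, inv_eq_one_div, ← add_div,
    div_le_iff₀ (by positivity), pow_succ, ← mul_assoc, inv_mul_cancel₀ (by positivity), one_mul]
  exact hd

lemma cantorInterval_succ_subset (hM : 0 < M) (j : ℕ) (w : Fin (j + 1) → Fin A) :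
    cantorInterval ω (j + 1) w ⊆ cantorInterval ω j (Fin.init w) :=
  Set.Icc_subset_Icc (cantorPoint_init_le ω j w) (cantorPoint_add_le_init ω hM j w)

/-- The intervals of `𝒞_j` have pairwise disjoint interiors. -/
lemma inv_pow_le_abs_sub_cantorPoint (hM : 0 < M) {j : ℕ} {w w' : Fin j → Fin A}
    (hne : w ≠ w') : ((M : ℝ) ^ j)⁻¹ ≤ |cantorPoint M A ω j w - cantorPoint M A ω j w'| := by
  induction j with
  | zero => exact absurd (Subsingleton.elim w w') hne
  | succ j ih =>
    by_cases hinit : Fin.init w = Fin.init w'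
    · have hlast : w (Fin.last j) ≠ w' (Fin.last j) := fun h =>
        hne (by rw [← Fin.snoc_init_self w, ← Fin.snoc_init_self w', hinit, h])
      have hdigit := (digit_injective (ω j (finFunctionFinEquiv (Fin.init w')))).ne hlast
      have hdist := Int.one_le_abs (sub_ne_zero.2 (Nat.cast_injective.ne hdigit))
      have hpos : (0 : ℝ) < (M : ℝ) ^ (j + 1) := by positivity
      rw [cantorPoint_succ, cantorPoint_succ, hinit, add_sub_add_left_eq_sub, ← sub_div,
        abs_div, abs_of_pos hpos, inv_eq_one_div]
      exact div_le_div_of_nonneg_right (by exact_mod_cast hdist) hpos.le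
    · have := cantorPoint_init_le ω j w
      have := cantorPoint_init_le ω j w'
      have := cantorPoint_add_le_init ω hM j w
      have := cantorPoint_add_le_init ω hM j w'
      rcases le_abs.1 (ih hinit) with h | h
      · exact le_abs.2 (.inl (by linarith))
      · exact le_abs.2 (.inr (by linarith))

end Geometry

section Coding

variable {M A : ℕ} (ω : Config M A)

/-- The point of `𝒞` with address `x`: the common point of the nested intervals
`cantorInterval ω j (fun i => x i)`. -/
noncomputable def codingMap (x : ℕ → Fin A) : ℝ :=
  ⨆ j, cantorPoint M A ω j (fun i => x i)

lemma codingMap_mem_cantorInterval (hM : 0 < M) (x : ℕ → Fin A) (j : ℕ) :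
    codingMap ω x ∈ cantorInterval ω j (fun i => x i) := by
  have hnested : Antitone fun j => cantorInterval ω j (fun i => x i) :=
    antitone_nat_of_succ_le fun j => cantorInterval_succ_subset ω hM j _
  exact Set.mem_iInter.1 (ciSup_mem_iInter_Icc_of_antitone_Icc hnested
    fun j => le_add_of_nonneg_right (by positivity)) j

lemma codingMap_mem_cantorSet (hM : 0 < M) (x : ℕ → Fin A) : codingMap ω x ∈ cantorSet M A ω :=
  Set.mem_iInter₂.2 fun j _ => Set.mem_iUnion.2 ⟨_, codingMap_mem_cantorInterval ω hM x j⟩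

lemma measurable_codingMap : Measurable (codingMap ω) :=
  Measurable.iSup fun j => (measurable_of_countable _).comp (by fun_prop)

end Coding

section AddressMeasure

variable (A : ℕ) [NeZero A]

noncomputable def addressMeasure : Measure (ℕ → Fin A) :=
  Measure.infinitePi fun _ => ProbabilityTheory.uniformOn Set.univ

instance : IsProbabilityMeasure (addressMeasure A) := by
  unfold addressMeasure; infer_instance

lemma addressMeasure_cylinder (j : ℕ) (v : Fin j → Fin A) :
    addressMeasure A {x | (fun i : Fin j => x i) = v} = ((A : ℝ≥0∞) ^ j)⁻¹ := by
  classical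
  have hcyl : {x : ℕ → Fin A | (fun i : Fin j => x i) = v}
      = Set.pi (Finset.range j : Set ℕ) fun i => if h : i < j then {v ⟨i, h⟩} else Set.univ := by
    ext x
    simp +contextual [funext_iff, Fin.forall_iff]
  rw [addressMeasure, hcyl, Measure.infinitePi_pi _ fun _ _ => by measurability]
  rw [Finset.prod_congr rfl (g := fun _ => (A : ℝ≥0∞)⁻¹) fun i hi => by
    simp [dif_pos (Finset.mem_range.1 hi), ProbabilityTheory.uniformOn_univ]]
  simp [ENNReal.inv_pow]

end AddressMeasure

section MassDistribution

variable {M A : ℕ} [NeZero A] (ω : Config M A)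

/-- A set of diameter at most `M⁻ʲ` meets at most four intervals of `𝒞_j`, each carrying
mass `A⁻ʲ`. -/
lemma addressMeasure_preimage_codingMap_le (hM : 0 < M) {E : Set ℝ} {j : ℕ}
    (hE : Metric.ediam E ≤ ((M : ℝ≥0∞) ^ j)⁻¹) :
    addressMeasure A (codingMap ω ⁻¹' E) ≤ 4 * ((A : ℝ≥0∞) ^ j)⁻¹ := by
  classical
  rcases E.eq_empty_or_nonempty with rfl | ⟨x₀, hx₀⟩
  · simp
  set L : ℝ := ((M : ℝ) ^ j)⁻¹
  have hL : 0 < L := by positivity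
  let V := Finset.univ.filter fun w => (cantorInterval ω j w ∩ E).Nonempty
  have hcover : codingMap ω ⁻¹' E ⊆ ⋃ w ∈ V, {x | (fun i : Fin j => x i) = w} := fun x hx =>
    Set.mem_biUnion (Finset.mem_filter.2
      ⟨Finset.mem_univ _, _, codingMap_mem_cantorInterval ω hM x j, hx⟩) rfl
  have hnear :
      ∀ w ∈ V, cantorPoint M A ω j w ∈ Set.Ico (x₀ - 2 * L) (x₀ - 2 * L + (4 : ℕ) * L) := by
    intro w hw
    obtain ⟨y, ⟨hy₁, hy₂⟩, hyE⟩ := (Finset.mem_filter.1 hw).2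
    have hy : dist y x₀ ≤ L := by
      rw [← ENNReal.ofReal_le_ofReal_iff hL.le, ← edist_dist, ENNReal.ofReal_inv_natCast_pow hM]
      exact (Metric.edist_le_ediam_of_mem hyE hx₀).trans hE
    rw [Real.dist_eq, abs_sub_le_iff] at hy
    constructor <;> push_cast <;> linarith
  have hcard : V.card ≤ 4 := Finset.card_le_of_separated_of_mem_Ico V _ hL hnear
    fun w _ w' _ hne => inv_pow_le_abs_sub_cantorPoint ω hM hne
  calc addressMeasure A (codingMap ω ⁻¹' E)
      ≤ ∑ w ∈ V, addressMeasure A {x | (fun i : Fin j => x i) = w} :=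
        (measure_mono hcover).trans (measure_biUnion_finset_le _ _)
    _ = V.card * ((A : ℝ≥0∞) ^ j)⁻¹ := by simp [addressMeasure_cylinder]
    _ ≤ 4 * ((A : ℝ≥0∞) ^ j)⁻¹ := by gcongr; exact_mod_cast hcard

lemma addressMeasure_preimage_codingMap_le_ediam_rpow (hM : 1 < M) (hA : 1 < A) {E : Set ℝ}
    (hE : Metric.ediam E ≤ 1) :
    addressMeasure A (codingMap ω ⁻¹' E) ≤ 4 * A * Metric.ediam E ^ Real.logb M A := by
  have hδ : 0 < Real.logb M A := Real.logb_pos (by exact_mod_cast hM) (by exact_mod_cast hA)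
  rcases eq_zero_or_pos (Metric.ediam E) with h0 | hpos
  · rw [h0, ENNReal.zero_rpow_of_pos hδ, mul_zero]
    have hlim : Tendsto (fun j : ℕ => 4 * ((A : ℝ≥0∞) ^ j)⁻¹) atTop (𝓝 0) := by
      simpa using ENNReal.Tendsto.const_mul
        (ENNReal.tendsto_inv_pow_atTop_nhds_zero (b := A) (by exact_mod_cast hA))
        (.inr ENNReal.ofNat_ne_top)
    exact ge_of_tendsto' hlim fun j =>
      addressMeasure_preimage_codingMap_le ω (by omega) (h0.trans_le zero_le)
  obtain ⟨n, hlt, hle⟩ := ENNReal.exists_inv_pow_succ_lt_le (b := M) (by exact_mod_cast hM) hpos hE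
  calc addressMeasure A (codingMap ω ⁻¹' E)
      ≤ 4 * ((A : ℝ≥0∞) ^ n)⁻¹ := addressMeasure_preimage_codingMap_le ω (by omega) hle
    _ = 4 * A * ((A : ℝ≥0∞) ^ (n + 1))⁻¹ := by
      rw [pow_succ, ENNReal.mul_inv (by simp) (by simp), mul_comm ((A : ℝ≥0∞) ^ n)⁻¹,
        ← mul_assoc, mul_assoc 4, ENNReal.mul_inv_cancel (Nat.cast_ne_zero.2 (by omega))
        (ENNReal.natCast_ne_top A), mul_one]
    _ = 4 * A * ((M : ℝ≥0∞) ^ (n + 1))⁻¹ ^ Real.logb M A := by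
      rw [ENNReal.inv_natCast_pow_rpow_logb hM (by omega)]
    _ ≤ 4 * A * Metric.ediam E ^ Real.logb M A := by gcongr

end MassDistribution

section HausdorffMeasure

variable {M A : ℕ} (ω : Config M A)

lemma hausdorffMeasure_cantorSet_ne_zero (hM : 1 < M) (hA : 1 < A) :
    μH[Real.logb M A] (cantorSet M A ω) ≠ 0 := by
  have : NeZero A := ⟨by omega⟩
  have hC₀ : (4 * A : ℝ≥0∞) ≠ 0 := mul_ne_zero four_ne_zero (Nat.cast_ne_zero.2 (by omega))
  have hC : (4 * A : ℝ≥0∞) ≠ ⊤ := ENNReal.mul_ne_top ENNReal.ofNat_ne_top (ENNReal.natCast_ne_top A)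
  have hmass : (4 * A : ℝ≥0∞)⁻¹ • (addressMeasure A).map (codingMap ω) ≤ μH[Real.logb M A] := by
    refine Measure.le_hausdorffMeasure _ _ 1 one_pos fun E hE => ?_
    rw [Measure.smul_apply, smul_eq_mul]
    calc (4 * A : ℝ≥0∞)⁻¹ * (addressMeasure A).map (codingMap ω) E
        ≤ (4 * A : ℝ≥0∞)⁻¹ * addressMeasure A (codingMap ω ⁻¹' closure E) := by
          rw [← Measure.map_apply (measurable_codingMap ω) isClosed_closure.measurableSet]
          gcongr
          exact subset_closure
      _ ≤ (4 * A : ℝ≥0∞)⁻¹ * (4 * A * Metric.ediam (closure E) ^ Real.logb M A) := by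
          gcongr
          exact addressMeasure_preimage_codingMap_le_ediam_rpow ω hM hA
            (by rwa [Metric.ediam_closure])
      _ = Metric.ediam E ^ Real.logb M A := by
          rw [← mul_assoc, ENNReal.inv_mul_cancel hC₀ hC, one_mul, Metric.ediam_closure]
  have hone : 1 ≤ (addressMeasure A).map (codingMap ω) (cantorSet M A ω) := by
    have hpre : codingMap ω ⁻¹' cantorSet M A ω = Set.univ :=
      Set.eq_univ_of_forall (codingMap_mem_cantorSet ω (by omega))
    calc 1 = addressMeasure A (codingMap ω ⁻¹' cantorSet M A ω) := by rw [hpre, measure_univ]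
      _ ≤ _ := Measure.le_map_apply (measurable_codingMap ω).aemeasurable _
  intro h0
  have h := (Measure.le_iff'.1 hmass (cantorSet M A ω)).trans_eq h0
  rw [Measure.smul_apply, smul_eq_mul, nonpos_iff_eq_zero, mul_eq_zero] at h
  rcases h with h | h
  · exact ENNReal.inv_ne_zero.2 hC h
  · exact one_ne_zero (le_zero_iff.1 (hone.trans_eq h))

lemma ediam_cantorInterval (hM : 0 < M) (j : ℕ) (w : Fin j → Fin A) :
    Metric.ediam (cantorInterval ω j w) = ((M : ℝ≥0∞) ^ j)⁻¹ := by
  rw [cantorInterval, Real.ediam_Icc, add_sub_cancel_left, ENNReal.ofReal_inv_natCast_pow hM]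

lemma hausdorffMeasure_cantorSet_le_one (hM : 1 < M) (hA : 0 < A) :
    μH[Real.logb M A] (cantorSet M A ω) ≤ 1 := by
  have hcover : ∀ᶠ j in atTop, cantorSet M A ω ⊆ ⋃ w, cantorInterval ω j w :=
    (eventually_ge_atTop 1).mono fun j hj => Set.biInter_subset_of_mem (t := cantorIter M A ω) hj
  refine (Measure.hausdorffMeasure_le_liminf_sum _ _ _
    (ENNReal.tendsto_inv_pow_atTop_nhds_zero (b := M) (by exact_mod_cast hM)) (cantorInterval ω)
    (.of_forall fun j w => (ediam_cantorInterval ω (by omega) j w).le) hcover).trans_eq ?_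
  have hsum :
      ∀ j, ∑ w : Fin j → Fin A, Metric.ediam (cantorInterval ω j w) ^ Real.logb M A = 1 := by
    intro j
    simp only [ediam_cantorInterval ω (by omega), ENNReal.inv_natCast_pow_rpow_logb hM hA,
      Finset.sum_const, Finset.card_univ, Fintype.card_fun, Fintype.card_fin, nsmul_eq_mul]
    push_cast
    exact ENNReal.mul_inv_cancel (pow_ne_zero _ (Nat.cast_ne_zero.2 (by omega)))
      (ENNReal.pow_ne_top (ENNReal.natCast_ne_top A))
  simp only [hsum, liminf_const]

end HausdorffMeasure

theorem dimH_cantorSet_general (M A : ℕ) (hM : 3 ≤ M) (hA2 : 2 ≤ A)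
    (ω : Config M A) :
    dimH (cantorSet M A ω) = ENNReal.ofReal (Real.logb M A) := by
  have hδ : 0 ≤ Real.logb M A :=
    Real.logb_nonneg (by exact_mod_cast (by omega : 1 < M)) (by exact_mod_cast (by omega : 1 ≤ A))
  have hcoe : ((Real.logb M A).toNNReal : ℝ) = Real.logb M A := Real.coe_toNNReal _ hδ
  apply dimH_of_hausdorffMeasure_ne_zero_ne_top <;> rw [hcoe]
  · exact hausdorffMeasure_cantorSet_ne_zero ω (by omega) (by omega)
  · exact ((hausdorffMeasure_cantorSet_le_one ω (by omega) (by omega)).trans_lt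
      ENNReal.one_lt_top).ne

/-- **Hausdorff dimension of the Cantor sets.**
Let `M ≥ 3` and `2 ≤ A ≤ M - 1`. Every Cantor set `𝒞` from the iterative
construction has Hausdorff dimension `δ = log A / log M`. -/
theorem dimH_cantorSet (M A : ℕ) (hM : 3 ≤ M) (hA2 : 2 ≤ A) (hAM : A ≤ M - 1)
    (ω : Config M A) :
    dimH (cantorSet M A ω) = ENNReal.ofReal (Real.logb M A) :=
  dimH_cantorSet_general M A hM hA2 ω

end FUPRandom
end
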